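/- Let T ≤ SL(3,ℂ) be the subgroup generated by diag(1,-1,-1), diag(-1,1,-1), M_τ, and let ω = ζ₃. Then the T-orbits on ℙ² of the points [1:1:1], [1:ω:ω²], [1:ω²:ω] each have exactly 4 elements and are pairwise distinct; no three points of any one of these orbits are collinear; and every point of ℙ² whose T-orbit has exactly 4 elements belongs to one of these three orbits. -/

import Mathlib

open Matrix Complex

noncomputable section

abbrev M3 : Type := Matrix (Fin 3) (Fin 3) ℂ
abbrev SL3 : Type := Matrix.SpecialLinearGroup (Fin 3) ℂ
abbrev P2 : Type := Projectivization ℂ (Fin 3 → ℂ)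

/-- The matrix `M_τ`. -/
def Mtau : M3 := !![0,1,0; 0,0,1; 1,0,0]

/-- `ζ_n = exp(2πi/n)`. -/
def zeta (n : ℕ) : ℂ := Complex.exp (2 * Real.pi * Complex.I / n)

/-- The subgroup of `SL(3,ℂ)` generated by a given set of matrices. -/
def genSL (s : Set M3) : Subgroup SL3 :=
  Subgroup.closure { g : SL3 | (g : M3) ∈ s }

/-- The orbit of a point of `ℙ²` under a set of (invertible) matrices,
acting by `[v] ↦ [g·v]`. -/
def projOrbit (G : Set M3) (p : P2) : Set P2 :=
  { q | ∃ g ∈ G, ∃ h : g.mulVec p.rep ≠ 0, Projectivization.mk ℂ (g.mulVec p.rep) h = q }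

/-- The orbit of a point of `ℙ²` under a subgroup of `SL(3,ℂ)`. -/
def projOrbitSL (G : Subgroup SL3) (p : P2) : Set P2 :=
  projOrbit ((fun g : SL3 => (g : M3)) '' (G : Set SL3)) p

/-- The point `[x:y:z] ∈ ℙ²`. -/
def pt (x y z : ℂ) (h : ![x,y,z] ≠ 0) : P2 := Projectivization.mk ℂ ![x,y,z] h

lemma vne₀ {x y z : ℂ} (hx : x ≠ 0) : ![x,y,z] ≠ 0 := by
  intro h; exact hx (by simpa using congrFun h 0)

lemma vne₁ {x y z : ℂ} (hy : y ≠ 0) : ![x,y,z] ≠ 0 := by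
  intro h; exact hy (by simpa using congrFun h 1)

lemma vne₂ {x y z : ℂ} (hz : z ≠ 0) : ![x,y,z] ≠ 0 := by
  intro h; exact hz (by simpa using congrFun h 2)

/-- No three distinct points of `P` are collinear. -/
def NoThreeCollinear (P : Set P2) : Prop :=
  ∀ p q r, p ∈ P → q ∈ P → r ∈ P → p ≠ q → p ≠ r → q ≠ r →
    LinearIndependent ℂ ![p.rep, q.rep, r.rep]

/-- The points of `P` all lie on a conic. -/
def LiesOnConic (P : Set P2) : Prop :=
  ∃ Q : QuadraticForm ℂ (Fin 3 → ℂ), Q ≠ 0 ∧ ∀ p ∈ P, Q p.rep = 0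

/-- The subgroup of `SL(3,ℂ)` generated by `diag(1,-1,-1)`, `diag(-1,1,-1)` and `M_τ`. -/
def TA4 : Subgroup SL3 :=
  genSL {Matrix.diagonal ![1, -1, -1], Matrix.diagonal ![-1, 1, -1], Mtau}

/-- The three points `[1:1:1]`, `[1:ω:ω²]`, `[1:ω²:ω]` (with `ω = ζ₃`). -/
def q₁ : P2 := pt 1 1 1 (vne₀ one_ne_zero)
def q₂ : P2 := pt 1 (zeta 3) (zeta 3 ^ 2) (vne₀ one_ne_zero)
def q₃ : P2 := pt 1 (zeta 3 ^ 2) (zeta 3) (vne₀ one_ne_zero)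

/-!
The sign changes `σ₁, σ₂` map `[1:u:w]` to `[1:±u:±w]` and `τ` permutes the coordinates
cyclically. When `u, w ≠ 0` these four sign changes are distinct points, so an orbit of size 4
consists exactly of them; since `τ[1:u:w] = [1:w/u:1/u]` must be one of them, `w = ±u²` and
`u³ = ±1`, i.e. the point is a sign change of `[1:a:a²]` with `a³ = 1`, and the orbit of
`[1:a:a²]` is exactly its four sign changes. Any three of these have determinant `±4a³ ≠ 0`.
A point with a zero coordinate lies in the orbit of `[1:0:0]`, which has 3 points, or of some
`[1:u:0]` with `u ≠ 0`, whose orbit contains `[1:±u:0]`, `[1:0:±1/u]` and `[0:1/u:1]`.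
-/

open MulAction Projectivization
open scoped Pointwise

theorem MulAction.orbit_closure_subset_of_finite {G α : Type*} [Group G] [MulAction G α]
    {s : Set G} {S : Set α} (hS : S.Finite) (hsS : ∀ g ∈ s, ∀ x ∈ S, g • x ∈ S) {x : α}
    (hx : x ∈ S) : orbit (Subgroup.closure s) x ⊆ S := by
  have hle : Subgroup.closure s ≤ stabilizer G S := (Subgroup.closure_le _).2 fun g hg =>
    (mem_stabilizer_set_iff_smul_set_subset hS).2 (Set.smul_set_subset_iff.2 (hsS g hg))
  rintro _ ⟨g, rfl⟩
  have hg : (g : G) • S = S := hle g.2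
  exact hg ▸ Set.smul_mem_smul_set hx

theorem MulAction.smul_mem_orbit_of_mem {G α : Type*} [Group G] [MulAction G α]
    {H : Subgroup G} {g : G} (hg : g ∈ H) (x : α) : g • x ∈ orbit H x :=
  ⟨⟨g, hg⟩, rfl⟩

theorem MulAction.orbit_smul_of_mem {G α : Type*} [Group G] [MulAction G α]
    {H : Subgroup G} {g : G} (hg : g ∈ H) (x : α) : orbit H (g • x) = orbit H x :=
  orbit_smul (⟨g, hg⟩ : H) x

theorem Matrix.SpecialLinearGroup.smul_mk {n K : Type*} [Fintype n] [DecidableEq n] [Field K]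
    (g : SpecialLinearGroup n K) {v : n → K} (hv : v ≠ 0) :
    g • mk K v hv = mk K ((g : Matrix n n K) *ᵥ v) ((smul_ne_zero_iff_ne g).2 hv) :=
  rfl

theorem projOrbitSL_eq_orbit (G : Subgroup SL3) (p : P2) : projOrbitSL G p = orbit G p := by
  have key (g : SL3) :
      g • p = mk ℂ ((g : M3) *ᵥ p.rep) ((smul_ne_zero_iff_ne g).2 p.rep_nonzero) := by
    conv_lhs => rw [← p.mk_rep]
    rfl
  ext q
  constructor
  · rintro ⟨_, ⟨g, hg, rfl⟩, -, rfl⟩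
    exact ⟨⟨g, hg⟩, key g⟩
  · rintro ⟨⟨g, hg⟩, rfl⟩
    exact ⟨g, ⟨g, hg, rfl⟩, _, (key g).symm⟩

theorem Mtau_mulVec (v : Fin 3 → ℂ) : Mtau *ᵥ v = ![v 1, v 2, v 0] := by
  ext i; fin_cases i <;> simp [Mtau, mulVec, dotProduct, Fin.sum_univ_three]

def affinePt (u w : ℂ) : P2 := pt 1 u w (vne₀ one_ne_zero)

@[simp] theorem affinePt_inj {u w u' w' : ℂ} :
    affinePt u w = affinePt u' w' ↔ u = u' ∧ w = w' := by
  refine ⟨fun h => ?_, fun ⟨hu, hw⟩ => hu ▸ hw ▸ rfl⟩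
  obtain ⟨c, hc⟩ := (mk_eq_mk_iff' ℂ ![1, u, w] ![1, u', w'] _ _).1 h
  obtain rfl : c = 1 := by simpa using congrFun hc 0
  simpa [eq_comm] using hc

theorem mk_eq_affinePt {x y z : ℂ} (h : ![x, y, z] ≠ 0) (hx : x ≠ 0) :
    mk ℂ ![x, y, z] h = affinePt (y / x) (z / x) := by
  refine (mk_eq_mk_iff' ℂ _ _ _ _).2 ⟨x, ?_⟩
  ext i; fin_cases i <;> simp [field]

theorem mk_ne_affinePt {v : Fin 3 → ℂ} (hv : v ≠ 0) (h0 : v 0 = 0) (u w : ℂ) :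
    mk ℂ v hv ≠ affinePt u w := by
  intro h
  obtain ⟨c, hc⟩ := (mk_eq_mk_iff' ℂ ![1, u, w] v _ _).1 h.symm
  simpa [h0] using congrFun hc 0

def coordPt (i : Fin 3) : P2 := mk ℂ (Pi.single i 1) (by simp)

theorem smul_coordPt_of_coe_eq_diagonal {g : SL3} {d : Fin 3 → ℂ} (hg : (g : M3) = diagonal d)
    (i : Fin 3) : g • coordPt i = coordPt i := by
  rw [coordPt, SpecialLinearGroup.smul_mk]
  exact (mk_eq_mk_iff' ℂ _ _ _ _).2 ⟨d i, by simp [hg, ← Pi.single_smul]⟩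

def signChanges (u w : ℂ) : Set P2 :=
  {affinePt u w, affinePt (-u) (-w), affinePt (-u) w, affinePt u (-w)}

theorem encard_signChanges {u w : ℂ} (hu : u ≠ 0) (hw : w ≠ 0) : (signChanges u w).encard = 4 := by
  rw [signChanges, Set.encard_insert_of_notMem, Set.encard_insert_of_notMem, Set.encard_pair]
  · rfl
  all_goals simp [hu, hw, CharZero.neg_eq_self_iff, CharZero.eq_neg_self_iff]

theorem linearIndependent_rep_affinePt {u₁ w₁ u₂ w₂ u₃ w₃ : ℂ}
    (h : (u₂ - u₁) * (w₃ - w₁) - (u₃ - u₁) * (w₂ - w₁) ≠ 0) :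
    LinearIndependent ℂ ![(affinePt u₁ w₁).rep, (affinePt u₂ w₂).rep, (affinePt u₃ w₃).rep] := by
  set A : M3 := Matrix.of ![![1, u₁, w₁], ![1, u₂, w₂], ![1, u₃, w₃]]
  have hdet : A.det ≠ 0 := by
    rw [det_fin_three]
    simp only [A, of_apply, cons_val', cons_val_zero, cons_val_one, cons_val_two, empty_val',
      cons_val_fin_one, head_cons, head_fin_const, tail_cons]
    convert h using 1
    ring
  have hne (i : Fin 3) : A i ≠ 0 := by fin_cases i <;> exact vne₀ one_ne_zero
  have hrep : ![(affinePt u₁ w₁).rep, (affinePt u₂ w₂).rep, (affinePt u₃ w₃).rep] =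
      Projectivization.rep ∘ fun i => mk ℂ (A i) (hne i) := by
    ext i : 1; fin_cases i <;> rfl
  rw [hrep, ← independent_iff]
  exact Independent.mk _ hne (linearIndependent_rows_of_det_ne_zero hdet)

theorem noThreeCollinear_signChanges {a : ℂ} (ha : a ≠ 0) :
    NoThreeCollinear (signChanges a (a ^ 2)) := by
  intro p q r hp hq hr hpq hpr hqr
  simp only [signChanges, Set.mem_insert_iff, Set.mem_singleton_iff] at hp hq hr
  rcases hp with rfl | rfl | rfl | rfl <;> rcases hq with rfl | rfl | rfl | rfl <;>
    rcases hr with rfl | rfl | rfl | rfl <;>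
    first
    | exact absurd rfl hpq
    | exact absurd rfl hpr
    | exact absurd rfl hqr
    | (apply linearIndependent_rep_affinePt; ring_nf; simp [ha])

namespace TA4

def σ₁ : SL3 := ⟨diagonal ![1, -1, -1], by simp [det_diagonal, Fin.prod_univ_three]⟩
def σ₂ : SL3 := ⟨diagonal ![-1, 1, -1], by simp [det_diagonal, Fin.prod_univ_three]⟩
def τ : SL3 := ⟨Mtau, by simp [Mtau, det_fin_three]⟩

@[simp] theorem coe_σ₁ : (σ₁ : M3) = diagonal ![1, -1, -1] := rfl
@[simp] theorem coe_σ₂ : (σ₂ : M3) = diagonal ![-1, 1, -1] := rfl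
@[simp] theorem coe_τ : (τ : M3) = Mtau := rfl

theorem σ₁_mem : σ₁ ∈ TA4 := Subgroup.subset_closure (Or.inl rfl)
theorem σ₂_mem : σ₂ ∈ TA4 := Subgroup.subset_closure (Or.inr (Or.inl rfl))
theorem τ_mem : τ ∈ TA4 := Subgroup.subset_closure (Or.inr (Or.inr rfl))

theorem orbit_subset {S : Set P2} (hS : S.Finite) (hσ₁ : ∀ x ∈ S, σ₁ • x ∈ S)
    (hσ₂ : ∀ x ∈ S, σ₂ • x ∈ S) (hτ : ∀ x ∈ S, τ • x ∈ S) {x : P2} (hx : x ∈ S) :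
    orbit TA4 x ⊆ S := by
  refine orbit_closure_subset_of_finite hS ?_ hx
  rintro g (hg | hg | hg)
  exacts [(Subtype.ext hg : g = σ₁) ▸ hσ₁, (Subtype.ext hg : g = σ₂) ▸ hσ₂,
    (Subtype.ext hg : g = τ) ▸ hτ]

@[simp] theorem σ₁_smul_affinePt (u w : ℂ) : σ₁ • affinePt u w = affinePt (-u) (-w) := by
  rw [affinePt, pt, SpecialLinearGroup.smul_mk]
  exact (mk_eq_mk_iff' ℂ _ _ _ _).2 ⟨1, by ext i; fin_cases i <;> simp [mulVec_diagonal]⟩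

@[simp] theorem σ₂_smul_affinePt (u w : ℂ) : σ₂ • affinePt u w = affinePt (-u) w := by
  rw [affinePt, pt, SpecialLinearGroup.smul_mk]
  exact (mk_eq_mk_iff' ℂ _ _ _ _).2 ⟨-1, by ext i; fin_cases i <;> simp [mulVec_diagonal]⟩

theorem τ_smul_mk {x y z : ℂ} (h : ![x, y, z] ≠ 0) (h' : ![y, z, x] ≠ 0) :
    τ • mk ℂ ![x, y, z] h = mk ℂ ![y, z, x] h' := by
  rw [SpecialLinearGroup.smul_mk]
  simp only [coe_τ, Mtau_mulVec]
  rfl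

theorem τ_smul_affinePt {u : ℂ} (hu : u ≠ 0) (w : ℂ) :
    τ • affinePt u w = affinePt (w / u) u⁻¹ := by
  rw [affinePt, pt, τ_smul_mk _ (vne₀ hu), mk_eq_affinePt] <;> simp [hu]

theorem τ_smul_coordPt (i : Fin 3) : τ • coordPt i = coordPt (i - 1) := by
  rw [coordPt, coordPt, SpecialLinearGroup.smul_mk]
  refine (mk_eq_mk_iff' ℂ _ _ _ _).2 ⟨1, ?_⟩
  fin_cases i <;> ext j <;> fin_cases j <;> simp [Mtau] <;> rfl

theorem signChanges_subset_orbit (u w : ℂ) : signChanges u w ⊆ orbit TA4 (affinePt u w) := by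
  rintro _ (rfl | rfl | rfl | rfl)
  · exact mem_orbit_self _
  · simpa using smul_mem_orbit_of_mem σ₁_mem (affinePt u w)
  · simpa using smul_mem_orbit_of_mem σ₂_mem (affinePt u w)
  · simpa [mul_smul] using smul_mem_orbit_of_mem (mul_mem σ₁_mem σ₂_mem) (affinePt u w)

theorem orbit_affinePt_eq_signChanges {a : ℂ} (ha : a ^ 3 = 1) :
    orbit TA4 (affinePt a (a ^ 2)) = signChanges a (a ^ 2) := by
  have ha₀ := (IsUnit.of_pow_eq_one ha three_ne_zero).ne_zero
  have hdiv : a ^ 2 / a = a := by field_simp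
  have hinv : a⁻¹ = a ^ 2 := inv_eq_of_mul_eq_one_right (by linear_combination ha)
  refine (orbit_subset (by simp [signChanges]) ?_ ?_ ?_ (by simp [signChanges])).antisymm
    (signChanges_subset_orbit _ _)
  all_goals rintro _ (rfl | rfl | rfl | rfl)
  all_goals simp [signChanges, τ_smul_affinePt, ha₀, hinv, hdiv, neg_div, div_neg]

theorem encard_orbit_affinePt {a : ℂ} (ha : a ^ 3 = 1) :
    (orbit TA4 (affinePt a (a ^ 2))).encard = 4 := by
  have ha₀ := (IsUnit.of_pow_eq_one ha three_ne_zero).ne_zero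
  rw [orbit_affinePt_eq_signChanges ha]
  exact encard_signChanges ha₀ (pow_ne_zero 2 ha₀)

theorem noThreeCollinear_orbit_affinePt {a : ℂ} (ha : a ^ 3 = 1) :
    NoThreeCollinear (orbit TA4 (affinePt a (a ^ 2))) := by
  rw [orbit_affinePt_eq_signChanges ha]
  exact noThreeCollinear_signChanges (IsUnit.of_pow_eq_one ha three_ne_zero).ne_zero

theorem eq_of_orbit_affinePt_eq {a b : ℂ} (ha : a ^ 3 = 1) (hb : b ^ 3 = 1)
    (h : orbit TA4 (affinePt a (a ^ 2)) = orbit TA4 (affinePt b (b ^ 2))) : a = b := by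
  have hmem : affinePt a (a ^ 2) ∈ signChanges b (b ^ 2) :=
    orbit_affinePt_eq_signChanges hb ▸ h ▸ mem_orbit_self _
  simp only [signChanges, Set.mem_insert_iff, Set.mem_singleton_iff, affinePt_inj] at hmem
  rcases hmem with ⟨rfl, -⟩ | ⟨rfl, -⟩ | ⟨rfl, -⟩ | ⟨rfl, -⟩
  all_goals first | rfl | (have : (2 : ℂ) = 0 := by linear_combination -ha - hb); norm_num at this

theorem exists_affinePt_mem_orbit (X : P2) : ∃ u w, affinePt u w ∈ orbit TA4 X := by
  induction X using Projectivization.ind with | h v hv => ?_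
  obtain ⟨x, y, z, rfl⟩ : ∃ x y z, v = ![x, y, z] :=
    ⟨v 0, v 1, v 2, by ext i; fin_cases i <;> rfl⟩
  by_cases hx : x = 0
  · by_cases hy : y = 0
    · have hz : z ≠ 0 := fun hz => hv (by simp [hx, hy, hz])
      refine ⟨x / z, y / z, ?_⟩
      rw [← mk_eq_affinePt (vne₀ hz) hz, ← τ_smul_mk (vne₁ hz), ← τ_smul_mk hv, ← mul_smul]
      exact smul_mem_orbit_of_mem (mul_mem τ_mem τ_mem) _
    · refine ⟨z / y, x / y, ?_⟩
      rw [← mk_eq_affinePt (vne₀ hy) hy, ← τ_smul_mk hv]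
      exact smul_mem_orbit_of_mem τ_mem _
  · refine ⟨y / x, z / x, ?_⟩
    rw [← mk_eq_affinePt hv hx]
    exact mem_orbit_self _

theorem encard_orbit_affinePt_zero_le : (orbit TA4 (affinePt 0 0)).encard ≤ 3 := by
  have h : affinePt 0 0 = coordPt 0 :=
    (mk_eq_mk_iff' ℂ _ _ _ _).2 ⟨1, by ext j; fin_cases j <;> simp⟩
  calc (orbit TA4 (affinePt 0 0)).encard ≤ (Set.range coordPt).encard := by
        refine Set.encard_mono (orbit_subset (Set.finite_range _) ?_ ?_ ?_ ⟨0, h.symm⟩)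
        all_goals rintro _ ⟨i, rfl⟩
        · exact ⟨i, (smul_coordPt_of_coe_eq_diagonal coe_σ₁ i).symm⟩
        · exact ⟨i, (smul_coordPt_of_coe_eq_diagonal coe_σ₂ i).symm⟩
        · exact ⟨i - 1, (τ_smul_coordPt i).symm⟩
    _ ≤ 3 := by
        rw [← Set.image_univ]
        exact (Set.encard_image_le _ _).trans (by simp)

theorem encard_orbit_affinePt_ne_four_of_zero {u : ℂ} (hu : u ≠ 0) :
    (orbit TA4 (affinePt u 0)).encard ≠ 4 := by
  intro h4
  set S : Set P2 := {affinePt u 0, affinePt (-u) 0, affinePt 0 u⁻¹, affinePt 0 (-u⁻¹)}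
  have hτ : τ • affinePt u 0 = affinePt 0 u⁻¹ := by simp [τ_smul_affinePt hu]
  have hS : S ⊆ orbit TA4 (affinePt u 0) := by
    rintro _ (rfl | rfl | rfl | rfl)
    · exact mem_orbit_self _
    · simpa using smul_mem_orbit_of_mem σ₁_mem (affinePt u 0)
    · exact hτ ▸ smul_mem_orbit_of_mem τ_mem _
    · simpa [mul_smul, hτ] using smul_mem_orbit_of_mem (mul_mem σ₁_mem τ_mem) (affinePt u 0)
  have hS4 : S.encard = 4 := by
    rw [Set.encard_insert_of_notMem, Set.encard_insert_of_notMem, Set.encard_pair]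
    · rfl
    all_goals simp [hu, CharZero.eq_neg_self_iff]
  have hSeq : S = orbit TA4 (affinePt u 0) :=
    Set.Finite.eq_of_subset_of_encard_le' (Set.finite_of_encard_eq_coe h4) hS (by rw [h4, hS4])
  have hτ₂ : τ • affinePt 0 u⁻¹ ∈ S := by
    rw [hSeq, ← hτ, ← mul_smul]
    exact smul_mem_orbit_of_mem (mul_mem τ_mem τ_mem) _
  rw [show τ • affinePt 0 u⁻¹ = mk ℂ ![0, u⁻¹, 1] (vne₂ one_ne_zero) from τ_smul_mk _ _] at hτ₂
  rcases hτ₂ with h | h | h | h <;> exact mk_ne_affinePt _ rfl _ _ h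

theorem exists_mem_signChanges_of_encard_orbit_eq_four {u w : ℂ} (hu : u ≠ 0) (hw : w ≠ 0)
    (h4 : (orbit TA4 (affinePt u w)).encard = 4) :
    ∃ a : ℂ, a ^ 3 = 1 ∧ affinePt u w ∈ signChanges a (a ^ 2) := by
  have hS : signChanges u w = orbit TA4 (affinePt u w) :=
    Set.Finite.eq_of_subset_of_encard_le' (Set.finite_of_encard_eq_coe h4)
      (signChanges_subset_orbit u w) (by rw [h4, encard_signChanges hu hw])
  have hτ : affinePt (w / u) u⁻¹ ∈ signChanges u w :=
    hS ▸ τ_smul_affinePt hu w ▸ smul_mem_orbit_of_mem τ_mem _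
  simp only [signChanges, Set.mem_insert_iff, Set.mem_singleton_iff, affinePt_inj] at hτ
  rcases hτ with ⟨h1, h2⟩ | ⟨h1, h2⟩ | ⟨h1, h2⟩ | ⟨h1, h2⟩
  · obtain rfl : w = u ^ 2 := by field_simp at h1; linear_combination h1
    refine ⟨u, ?_, by simp [signChanges]⟩
    field_simp at h2; linear_combination -h2
  · obtain rfl : w = -u ^ 2 := by field_simp at h1; linear_combination h1
    refine ⟨u, ?_, by simp [signChanges]⟩
    field_simp at h2; linear_combination -h2
  · obtain rfl : w = -u ^ 2 := by field_simp at h1; linear_combination h1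
    refine ⟨-u, ?_, by simp [signChanges]⟩
    field_simp at h2; linear_combination -h2
  · obtain rfl : w = u ^ 2 := by field_simp at h1; linear_combination h1
    refine ⟨-u, ?_, by simp [signChanges]⟩
    field_simp at h2; linear_combination -h2

theorem exists_cube_root_of_encard_orbit_eq_four {X : P2} (h4 : (orbit TA4 X).encard = 4) :
    ∃ a : ℂ, a ^ 3 = 1 ∧ X ∈ orbit TA4 (affinePt a (a ^ 2)) := by
  obtain ⟨u, w, hX⟩ := exists_affinePt_mem_orbit X
  rw [← orbit_eq_iff.2 hX] at h4
  suffices ∃ a : ℂ, a ^ 3 = 1 ∧ affinePt u w ∈ signChanges a (a ^ 2) by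
    obtain ⟨a, ha, hmem⟩ := this
    rw [← orbit_affinePt_eq_signChanges ha] at hmem
    exact ⟨a, ha, orbit_eq_iff.2 hmem ▸ orbit_eq_iff.2 hX ▸ mem_orbit_self X⟩
  rcases eq_or_ne u 0 with rfl | hu <;> rcases eq_or_ne w 0 with rfl | hw
  · have := h4 ▸ encard_orbit_affinePt_zero_le
    norm_num at this
  · have hττ : (τ * τ) • affinePt 0 w = affinePt w⁻¹ 0 := by
      rw [mul_smul, affinePt, pt, τ_smul_mk _ (vne₁ hw), τ_smul_mk _ (vne₀ hw),
        mk_eq_affinePt _ hw]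
      simp
    rw [← orbit_smul_of_mem (mul_mem τ_mem τ_mem), hττ] at h4
    exact absurd h4 (encard_orbit_affinePt_ne_four_of_zero (inv_ne_zero hw))
  · exact absurd h4 (encard_orbit_affinePt_ne_four_of_zero hu)
  · exact exists_mem_signChanges_of_encard_orbit_eq_four hu hw h4

end TA4

theorem isPrimitiveRoot_zeta_three : IsPrimitiveRoot (zeta 3) 3 := by
  simpa [zeta] using Complex.isPrimitiveRoot_exp 3 (by norm_num)

theorem pow_three_eq_one_iff {a : ℂ} : a ^ 3 = 1 ↔ a = 1 ∨ a = zeta 3 ∨ a = zeta 3 ^ 2 := by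
  have hω := isPrimitiveRoot_zeta_three
  refine ⟨fun ha => ?_, ?_⟩
  · obtain ⟨i, hi, rfl⟩ := hω.eq_pow_of_pow_eq_one ha
    interval_cases i <;> simp
  · rintro (rfl | rfl | rfl)
    · exact one_pow 3
    · exact hω.pow_eq_one
    · rw [← pow_mul, mul_comm, pow_mul, hω.pow_eq_one, one_pow]

/-- the `T`-orbits of `[1:1:1]`, `[1:ω:ω²]`, `[1:ω²:ω]` each have exactly 4
elements and are pairwise distinct; no three points of any one of them are collinear; and
every point of `ℙ²` whose `T`-orbit has exactly 4 elements belongs to one of these orbits. -/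
theorem statement7 :
    ((projOrbitSL TA4 q₁).encard = 4 ∧ (projOrbitSL TA4 q₂).encard = 4 ∧
      (projOrbitSL TA4 q₃).encard = 4) ∧
    (projOrbitSL TA4 q₁ ≠ projOrbitSL TA4 q₂ ∧ projOrbitSL TA4 q₁ ≠ projOrbitSL TA4 q₃ ∧
      projOrbitSL TA4 q₂ ≠ projOrbitSL TA4 q₃) ∧
    (NoThreeCollinear (projOrbitSL TA4 q₁) ∧ NoThreeCollinear (projOrbitSL TA4 q₂) ∧
      NoThreeCollinear (projOrbitSL TA4 q₃)) ∧
    (∀ X : P2, (projOrbitSL TA4 X).encard = 4 →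
      X ∈ projOrbitSL TA4 q₁ ∨ X ∈ projOrbitSL TA4 q₂ ∨ X ∈ projOrbitSL TA4 q₃) := by
  have hω := isPrimitiveRoot_zeta_three
  have h₁ : (1 : ℂ) ^ 3 = 1 := pow_three_eq_one_iff.2 (Or.inl rfl)
  have h₂ : zeta 3 ^ 3 = 1 := pow_three_eq_one_iff.2 (Or.inr (Or.inl rfl))
  have h₃ : (zeta 3 ^ 2) ^ 3 = 1 := pow_three_eq_one_iff.2 (Or.inr (Or.inr rfl))
  have hq₁ : q₁ = affinePt 1 (1 ^ 2) := by rw [one_pow]; rfl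
  have hq₂ : q₂ = affinePt (zeta 3) (zeta 3 ^ 2) := rfl
  have hq₃ : q₃ = affinePt (zeta 3 ^ 2) ((zeta 3 ^ 2) ^ 2) := by
    rw [← pow_mul, show zeta 3 ^ (2 * 2) = zeta 3 by linear_combination zeta 3 * h₂]; rfl
  simp only [projOrbitSL_eq_orbit, hq₁, hq₂, hq₃]
  refine ⟨⟨TA4.encard_orbit_affinePt h₁, TA4.encard_orbit_affinePt h₂,
      TA4.encard_orbit_affinePt h₃⟩, ⟨fun h => ?_, fun h => ?_, fun h => ?_⟩,
    ⟨TA4.noThreeCollinear_orbit_affinePt h₁, TA4.noThreeCollinear_orbit_affinePt h₂,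
      TA4.noThreeCollinear_orbit_affinePt h₃⟩, fun X hX => ?_⟩
  · exact hω.ne_one (by norm_num) (TA4.eq_of_orbit_affinePt_eq h₁ h₂ h).symm
  · exact hω.pow_ne_one_of_pos_of_lt two_ne_zero (by norm_num)
      (TA4.eq_of_orbit_affinePt_eq h₁ h₃ h).symm
  · have := hω.pow_inj (i := 1) (j := 2) (by norm_num) (by norm_num)
      (by simpa using TA4.eq_of_orbit_affinePt_eq h₂ h₃ h)
    norm_num at this
  · obtain ⟨a, ha, hXa⟩ := TA4.exists_cube_root_of_encard_orbit_eq_four hX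
    rcases pow_three_eq_one_iff.1 ha with rfl | rfl | rfl
    exacts [Or.inl hXa, Or.inr (Or.inl hXa), Or.inr (Or.inr hXa)]
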